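/- There exists a constant C > 0 depending only on m such that for every 1 ≤ p < ∞, every f ∈ L^p(G_m), every k ∈ ℕ and every j with M_k ≤ j < M_{k+1}, one has j · ∫_{G_m} ‖f(·+t) − f‖_{L^p(G_m)} · |K_j(t)| dμ(t) ≤ C Σ_{l=0}^{k} Σ_{s=0}^{l} M_s ω_p(1/M_s, f). -/

import Mathlib

open MeasureTheory Filter Finset Asymptotics ENNReal NNReal

noncomputable section

namespace VilenkinPaper

/-- The Vilenkin group `G_m = ∏_k ℤ_{m_k}`. -/
abbrev G (m : ℕ → ℕ) : Type := ∀ k, ZMod (m k)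

/-- The generalized powers `M_0 = 1`, `M_{k+1} = m_k M_k`. -/
def M (m : ℕ → ℕ) : ℕ → ℕ
  | 0 => 1
  | k + 1 => m k * M m k

/-- The basic neighborhoods `I_n = {y : y_0 = ⋯ = y_{n-1} = 0}`. -/
def I (m : ℕ → ℕ) (n : ℕ) : Set (G m) := {y | ∀ k < n, y k = 0}

/-- The generalized Rademacher functions `r_k(x) = exp(2πi x_k / m_k)`. -/
def rad (m : ℕ → ℕ) (k : ℕ) (x : G m) : ℂ :=
  Complex.exp (2 * Real.pi * Complex.I * ((x k).val : ℂ) / (m k : ℂ))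

/-- The `j`-th digit of `n` in the base determined by `m`. -/
def digit (m : ℕ → ℕ) (n j : ℕ) : ℕ := (n / M m j) % m j

/-- The Vilenkin functions `ψ_n = ∏_k r_k^{n_k}`. -/
def psi (m : ℕ → ℕ) (n : ℕ) (x : G m) : ℂ :=
  ∏ᶠ k, rad m k x ^ digit m n k

/-- Vilenkin-Fourier coefficient `f̂(k) = ∫ f ψ̄_k dμ`. -/
def fourierCoeff (m : ℕ → ℕ) (μ : Measure (G m)) (f : G m → ℂ) (k : ℕ) : ℂ :=
  ∫ x, f x * (starRingEnd ℂ) (psi m k x) ∂μ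

/-- Partial sums `S_n f = ∑_{k=0}^{n-1} f̂(k) ψ_k`. -/
def S (m : ℕ → ℕ) (μ : Measure (G m)) (n : ℕ) (f : G m → ℂ) (x : G m) : ℂ :=
  ∑ k ∈ Finset.range n, fourierCoeff m μ f k * psi m k x

/-- Fejér means `σ_n f = (1/n) ∑_{k=1}^n S_k f`. -/
def sigma (m : ℕ → ℕ) (μ : Measure (G m)) (n : ℕ) (f : G m → ℂ) (x : G m) : ℂ :=
  (n : ℂ)⁻¹ * ∑ k ∈ Finset.Icc 1 n, S m μ k f x

/-- Dirichlet kernels `D_n = ∑_{k=0}^{n-1} ψ_k`. -/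
def D (m : ℕ → ℕ) (n : ℕ) (x : G m) : ℂ := ∑ k ∈ Finset.range n, psi m k x

/-- Fejér kernels `K_n = (1/n) ∑_{k=1}^n D_k`. -/
def K (m : ℕ → ℕ) (n : ℕ) (x : G m) : ℂ := (n : ℂ)⁻¹ * ∑ k ∈ Finset.Icc 1 n, D m k x

/-- Convolution `(g ∗ f)(x) = ∫ f(t) g(x - t) dμ(t)`. -/
def conv (m : ℕ → ℕ) (μ : Measure (G m)) (g f : G m → ℂ) (x : G m) : ℂ :=
  ∫ t, f t * g (x - t) ∂μ

/-- `Q_n = ∑_{k=0}^{n-1} q_k`. -/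
def Q (q : ℕ → ℝ) (n : ℕ) : ℝ := ∑ k ∈ Finset.range n, q k

/-- Nörlund means `t_n f = (1/Q_n) ∑_{k=1}^n q_{n-k} S_k f`. -/
def T (m : ℕ → ℕ) (μ : Measure (G m)) (q : ℕ → ℝ) (n : ℕ) (f : G m → ℂ) (x : G m) : ℂ :=
  ((Q q n : ℝ) : ℂ)⁻¹ * ∑ k ∈ Finset.Icc 1 n, ((q (n - k) : ℝ) : ℂ) * S m μ k f x

/-- The modulus of continuity `ω_p(1/M_n, f) = sup_{t ∈ I_n} ‖f(·+t) - f‖_p`. -/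
def omega (m : ℕ → ℕ) (μ : Measure (G m)) (p : ℝ≥0∞) (f : G m → ℂ) (n : ℕ) : ℝ :=
  ⨆ t ∈ I m n, (eLpNorm (fun x => f (x + t) - f x) p μ).toReal

/-!
Write `T_j = ∑_{n<j} D_n`, so that `j K_j = T_{j+1}`. Splitting `[0, j)` into blocks of length
`M_k` and using `D_{a M_k + b} = D_{a M_k} + ψ_{a M_k} D_b` for `b ≤ M_k` together with
`D_{a M_k} = (∑_{v<a} r_k^v) M_k 1_{I_k}` gives, for `j ≤ M_{k+1}`,
`|T_j| ≤ m_k ((m_k + 1) M_k² 1_{I_k} + |T_{M_k}|) + |T_{j % M_k}|`. The same splitting of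
`[0, M_{l+1})`, where now `∑_{v<m_l} r_l^v = m_l 1_{x_l = 0}`, gives by induction
`|T_{M_l}| ≤ ∑_{s<l} m_s M_s M_l 1_{J_{s,l}}`, with `J_{s,l}` the set where the coordinates below
`l` other than the `s`-th vanish. On `I_s ⊇ J_{s,l}` the integrand `‖f(· + t) - f‖_p` is at most
`ω_p(1/M_s, f)`, and `μ I_l = 1 / M_l`, `μ J_{s,l} = m_s / M_l`, so integrating this majorant of
`j |K_j|` gives the estimate with `C = (R + 1)³`.
-/

variable {m : ℕ → ℕ}

lemma M_succ (k : ℕ) : M m (k + 1) = m k * M m k := rfl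

lemma M_pos (hm : ∀ k, 0 < m k) : ∀ n, 0 < M m n
  | 0 => Nat.one_pos
  | n + 1 => Nat.mul_pos (hm n) (M_pos hm n)

lemma M_dvd_M {s n : ℕ} (h : s ≤ n) : M m s ∣ M m n := by
  induction n, h using Nat.le_induction with
  | base => rfl
  | succ n _ ih => exact ih.mul_left (m n)

lemma M_mono (hm : ∀ k, 0 < m k) : Monotone (M m) :=
  monotone_nat_of_le_succ fun n => Nat.le_mul_of_pos_left _ (hm n)

lemma lt_M_self (hm : ∀ k, 2 ≤ m k) : ∀ n, n < M m n
  | 0 => Nat.one_pos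
  | n + 1 => by
    have := lt_M_self hm n
    rw [M_succ]
    nlinarith [hm n]

lemma digit_eq_zero_of_lt {n j : ℕ} (h : n < M m j) : digit m n j = 0 := by
  simp [digit, Nat.div_eq_of_lt h]

lemma div_M_eq_mul_of_dvd (hm : ∀ k, 0 < m k) {a i : ℕ} (h : M m (i + 1) ∣ a) :
    a / M m i = m i * (a / M m (i + 1)) := by
  obtain ⟨c, rfl⟩ := h
  rw [M_succ, Nat.mul_div_cancel_left _ (Nat.mul_pos (hm i) (M_pos hm i)), mul_assoc,
    mul_comm (M m i), ← mul_assoc, Nat.mul_div_cancel _ (M_pos hm i)]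

lemma digit_eq_zero_of_dvd (hm : ∀ k, 0 < m k) {a i : ℕ} (h : M m (i + 1) ∣ a) :
    digit m a i = 0 := by
  simp [digit, div_M_eq_mul_of_dvd hm h]

lemma digit_add (hm : ∀ k, 0 < m k) {l a b : ℕ} (ha : M m l ∣ a) (hb : b < M m l) (i : ℕ) :
    digit m (a + b) i = digit m a i + digit m b i := by
  rcases lt_or_ge i l with hil | hli
  · have hi : M m (i + 1) ∣ a := (M_dvd_M hil).trans ha
    rw [digit_eq_zero_of_dvd hm hi, zero_add, digit, digit,
      Nat.add_div_of_dvd_right ((M_dvd_M i.le_succ).trans hi), div_M_eq_mul_of_dvd hm hi,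
      Nat.mul_add_mod]
  · obtain ⟨q, hq⟩ := M_dvd_M (m := m) hli
    have hb0 : b / M m l = 0 := Nat.div_eq_of_lt hb
    rw [digit_eq_zero_of_lt (hb.trans_le (M_mono hm hli)), add_zero, digit, digit, hq,
      ← Nat.div_div_eq_div_mul, ← Nat.div_div_eq_div_mul, Nat.add_div_of_dvd_right ha, hb0,
      add_zero]

lemma digit_mul_M (hm : ∀ k, 0 < m k) {v l : ℕ} (hv : v < m l) (i : ℕ) :
    digit m (v * M m l) i = if i = l then v else 0 := by
  split_ifs with hil
  · subst hil
    simp [digit, Nat.mul_div_cancel _ (M_pos hm i), Nat.mod_eq_of_lt hv]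
  rcases lt_or_gt_of_ne hil with hil | hli
  · exact digit_eq_zero_of_dvd hm ((M_dvd_M hil).trans (dvd_mul_left _ _))
  · refine digit_eq_zero_of_lt ((?_ : v * M m l < M m (l + 1)).trans_le (M_mono hm hli))
    rw [M_succ]
    exact Nat.mul_lt_mul_of_pos_right hv (M_pos hm l)

lemma rad_eq_stdAddChar (k : ℕ) [NeZero (m k)] (x : G m) :
    rad m k x = ZMod.stdAddChar (x k) := by
  rw [ZMod.stdAddChar_apply, ZMod.toCircle_apply, rad]

lemma norm_rad (k : ℕ) (x : G m) : ‖rad m k x‖ = 1 := by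
  rw [rad, Complex.norm_exp]
  simp [Complex.div_re]

lemma rad_pow (k : ℕ) [NeZero (m k)] (x : G m) (v : ℕ) :
    rad m k x ^ v = ZMod.stdAddChar ((v : ZMod (m k)) * x k) := by
  rw [rad_eq_stdAddChar, ← AddChar.map_nsmul_eq_pow, nsmul_eq_mul]

lemma geom_sum_rad (k : ℕ) [NeZero (m k)] (x : G m) :
    ∑ v ∈ range (m k), rad m k x ^ v = if x k = 0 then (m k : ℂ) else 0 := by
  split_ifs with hx
  · simp [rad_pow, hx]
  · have hne : rad m k x ≠ 1 := by
      rw [rad_eq_stdAddChar, ← (ZMod.stdAddChar (N := m k)).map_zero_eq_one]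
      exact ZMod.injective_stdAddChar.ne hx
    rw [geom_sum_eq hne, rad_pow, ZMod.natCast_self, zero_mul, AddChar.map_zero_eq_one,
      sub_self, zero_div]

lemma norm_geom_sum_rad_le (k : ℕ) (x : G m) (d : ℕ) :
    ‖∑ v ∈ range d, rad m k x ^ v‖ ≤ d :=
  (norm_sum_le _ _).trans (by simp [norm_rad])

lemma psi_eq_prod (hm : ∀ k, 0 < m k) {n N : ℕ} (h : n < M m N) (x : G m) :
    psi m n x = ∏ k ∈ range N, rad m k x ^ digit m n k := by
  refine finprod_eq_prod_of_mulSupport_subset _ fun k hk => ?_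
  by_contra hkN
  simp only [coe_range, Set.mem_Iio, not_lt] at hkN
  exact hk (by simp [digit_eq_zero_of_lt (h.trans_le (M_mono hm hkN))])

lemma psi_mul_M (hm : ∀ k, 0 < m k) {v l : ℕ} (hv : v < m l) (x : G m) :
    psi m (v * M m l) x = rad m l x ^ v := by
  have hlt : v * M m l < M m (l + 1) := by
    rw [M_succ]
    exact Nat.mul_lt_mul_of_pos_right hv (M_pos hm l)
  rw [psi_eq_prod hm hlt, prod_eq_single_of_mem l (self_mem_range_succ l) fun k _ hk => by
      rw [digit_mul_M hm hv, if_neg hk, pow_zero], digit_mul_M hm hv, if_pos rfl]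

@[simp] lemma psi_zero (x : G m) : psi m 0 x = 1 := by simp [psi, digit]

@[simp] lemma D_zero (x : G m) : D m 0 x = 0 := by simp [D]

lemma mem_I_succ {n : ℕ} {x : G m} : x ∈ I m (n + 1) ↔ x ∈ I m n ∧ x n = 0 := by
  simp only [I, Set.mem_ofPred_eq, Nat.lt_succ_iff_lt_or_eq, or_imp, forall_and, forall_eq]

@[simp] lemma I_zero : I m 0 = Set.univ := by simp [I]

def J (m : ℕ → ℕ) (s n : ℕ) : Set (G m) := {y | ∀ i < n, i ≠ s → y i = 0}

lemma J_self_succ (l : ℕ) : J m l (l + 1) = I m l := by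
  ext y
  simp only [J, I, Set.mem_ofPred_eq]
  exact ⟨fun h k hk => h k (by omega) (by omega), fun h k hk hkl => h k (by omega)⟩

lemma mem_J_succ {s l : ℕ} (hsl : s ≠ l) {x : G m} :
    x ∈ J m s (l + 1) ↔ x ∈ J m s l ∧ x l = 0 := by
  simp only [J, Set.mem_ofPred_eq, Nat.lt_succ_iff_lt_or_eq, or_imp, forall_and, forall_eq]
  exact and_congr_right' ⟨fun h => h hsl.symm, fun h _ => h⟩

lemma sum_mul_indicator_J_succ (c : ℕ → ℝ) (l : ℕ) (x : G m) :
    ∑ s ∈ range l, c s * (J m s (l + 1)).indicator 1 x =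
      if x l = 0 then ∑ s ∈ range l, c s * (J m s l).indicator 1 x else 0 := by
  split_ifs with hx
  · refine sum_congr rfl fun s hs => ?_
    by_cases hxJ : x ∈ J m s l <;> simp [mem_J_succ (mem_range.mp hs).ne, hx, hxJ]
  · exact sum_eq_zero fun s hs => by simp [mem_J_succ (mem_range.mp hs).ne, hx]

lemma J_subset_I {s n : ℕ} (h : s ≤ n) : J m s n ⊆ I m s :=
  fun _ hy k hk => hy k (hk.trans_le h) hk.ne

lemma measurableSet_I (n : ℕ) : MeasurableSet (I m n) := by
  have : I m n = Set.pi {k | k < n} fun _ => {0} := by ext; simp [I]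
  rw [this]
  exact MeasurableSet.pi (Set.to_countable _) fun _ _ => measurableSet_singleton 0

lemma measurableSet_J (s n : ℕ) : MeasurableSet (J m s n) := by
  have : J m s n = Set.pi {i | i < n ∧ i ≠ s} fun _ => {0} := by ext; simp [J, and_imp]
  rw [this]
  exact MeasurableSet.pi (Set.to_countable _) fun _ _ => measurableSet_singleton 0

section

variable (hm : ∀ k, 2 ≤ m k)
include hm

lemma norm_psi (n : ℕ) (x : G m) : ‖psi m n x‖ = 1 := by
  simp [psi_eq_prod (fun k => zero_lt_two.trans_le (hm k)) (lt_M_self hm n), norm_rad]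

lemma psi_add {l a b : ℕ} (ha : M m l ∣ a) (hb : b < M m l) (x : G m) :
    psi m (a + b) x = psi m a x * psi m b x := by
  have hm₀ k : 0 < m k := zero_lt_two.trans_le (hm k)
  have hN := lt_M_self hm (a + b)
  rw [psi_eq_prod hm₀ hN, psi_eq_prod hm₀ ((Nat.le_add_right a b).trans_lt hN),
    psi_eq_prod hm₀ ((Nat.le_add_left b a).trans_lt hN), ← prod_mul_distrib]
  simp only [digit_add hm₀ ha hb, pow_add]

lemma D_add {l a b : ℕ} (ha : M m l ∣ a) (hb : b ≤ M m l) (x : G m) :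
    D m (a + b) x = D m a x + psi m a x * D m b x := by
  rw [D, D, D, sum_range_add, mul_sum]
  congr 1
  exact sum_congr rfl fun c hc => psi_add hm ha ((mem_range.mp hc).trans_le hb) x

lemma D_mul_M {d l : ℕ} (hd : d ≤ m l) (x : G m) :
    D m (d * M m l) x = (∑ v ∈ range d, rad m l x ^ v) * D m (M m l) x := by
  induction d with
  | zero => simp
  | succ d ih =>
    rw [add_one_mul, D_add hm (dvd_mul_left _ _) le_rfl, ih (by omega),
      psi_mul_M (fun k => zero_lt_two.trans_le (hm k)) (by omega), sum_range_succ, add_mul]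

lemma D_M (n : ℕ) (x : G m) : D m (M m n) x = M m n * (I m n).indicator 1 x := by
  induction n with
  | zero => simp [M, D]
  | succ n ih =>
    have := NeZero.of_pos (zero_lt_two.trans_le (hm n))
    rw [M_succ, D_mul_M hm le_rfl, geom_sum_rad, ih]
    by_cases hxn : x n = 0 <;> by_cases hxI : x ∈ I m n <;> simp [mem_I_succ, hxn, hxI]

lemma norm_D_mul_M_le {d l : ℕ} (hd : d ≤ m l) (x : G m) :
    ‖D m (d * M m l) x‖ ≤ m l * M m l * (I m l).indicator 1 x := by
  rw [D_mul_M hm hd, D_M hm, norm_mul, norm_mul, Complex.norm_natCast]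
  have hI : ‖(I m l).indicator (1 : G m → ℂ) x‖ = (I m l).indicator 1 x := by
    by_cases hx : x ∈ I m l <;> simp [hx]
  rw [hI, ← mul_assoc]
  gcongr
  · exact Set.indicator_nonneg (fun _ _ => zero_le_one) x
  · exact (norm_geom_sum_rad_le l x d).trans (Nat.cast_le.mpr hd)

lemma sum_D_add {l a r : ℕ} (ha : M m l ∣ a) (hr : r ≤ M m l) (x : G m) :
    ∑ c ∈ range r, D m (a + c) x = r * D m a x + psi m a x * ∑ c ∈ range r, D m c x := by
  rw [sum_congr rfl fun c hc => D_add hm ha ((mem_range.mp hc).le.trans hr) x, sum_add_distrib,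
    sum_const, card_range, nsmul_eq_mul, mul_sum]

lemma sum_D_mul_M {d l : ℕ} (hd : d ≤ m l) (x : G m) :
    ∑ n ∈ range (d * M m l), D m n x =
      M m l * ∑ a ∈ range d, D m (a * M m l) x +
        (∑ a ∈ range d, rad m l x ^ a) * ∑ b ∈ range (M m l), D m b x := by
  induction d with
  | zero => simp
  | succ d ih =>
    rw [add_one_mul, sum_range_add, ih (by omega), sum_D_add hm (dvd_mul_left _ _) le_rfl,
      psi_mul_M (fun k => zero_lt_two.trans_le (hm k)) (by omega), sum_range_succ, sum_range_succ]
    ring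

lemma norm_M_mul_sum_D_mul_M_le {d l : ℕ} (hd : d ≤ m l) (x : G m) :
    ‖M m l * ∑ a ∈ range d, D m (a * M m l) x‖ ≤
      m l * (m l * M m l ^ 2 * (I m l).indicator 1 x) := by
  have hι : 0 ≤ (I m l).indicator (1 : G m → ℝ) x :=
    Set.indicator_nonneg (fun _ _ => zero_le_one) x
  rw [norm_mul, Complex.norm_natCast]
  calc (M m l : ℝ) * ‖∑ a ∈ range d, D m (a * M m l) x‖
      ≤ M m l * ∑ a ∈ range d, (m l * M m l : ℝ) * (I m l).indicator 1 x := by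
        gcongr
        exact (norm_sum_le _ _).trans (sum_le_sum fun a ha =>
          norm_D_mul_M_le hm ((mem_range.mp ha).le.trans hd) x)
    _ = d * (m l * M m l ^ 2 * (I m l).indicator 1 x) := by
        rw [sum_const, card_range, nsmul_eq_mul]
        ring
    _ ≤ m l * (m l * M m l ^ 2 * (I m l).indicator 1 x) := by gcongr

lemma norm_sum_D_M_le (l : ℕ) (x : G m) :
    ‖∑ b ∈ range (M m l), D m b x‖ ≤
      ∑ s ∈ range l, (m s * M m s * M m l : ℝ) * (J m s l).indicator 1 x := by
  induction l with
  | zero => simp [M]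
  | succ l ih =>
    have := NeZero.of_pos (zero_lt_two.trans_le (hm l))
    calc ‖∑ b ∈ range (M m (l + 1)), D m b x‖
        = ‖M m l * ∑ a ∈ range (m l), D m (a * M m l) x +
            (∑ a ∈ range (m l), rad m l x ^ a) * ∑ b ∈ range (M m l), D m b x‖ := by
          rw [M_succ, sum_D_mul_M hm le_rfl]
      _ ≤ m l * (m l * M m l ^ 2 * (I m l).indicator 1 x) + ‖∑ a ∈ range (m l), rad m l x ^ a‖ *
            ∑ s ∈ range l, (m s * M m s * M m l : ℝ) * (J m s l).indicator 1 x :=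
          norm_add_le_of_le (norm_M_mul_sum_D_mul_M_le hm le_rfl x)
            ((norm_mul_le _ _).trans (mul_le_mul_of_nonneg_left ih (norm_nonneg _)))
      _ = ∑ s ∈ range (l + 1), (m s * M m s * M m (l + 1) : ℝ) * (J m s (l + 1)).indicator 1 x := by
          rw [geom_sum_rad, sum_range_succ, J_self_succ, sum_mul_indicator_J_succ, M_succ]
          split_ifs <;> simp [mul_sum] <;> ring_nf

lemma norm_sum_D_le {k j : ℕ} (hj : j ≤ M m k) (x : G m) :
    ‖∑ n ∈ range j, D m n x‖ ≤ ∑ l ∈ range k,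
      m l * ((m l + 1) * (M m l : ℝ) ^ 2 * (I m l).indicator 1 x +
        ‖∑ b ∈ range (M m l), D m b x‖) := by
  induction k generalizing j with
  | zero =>
    have hj₁ : j ≤ 1 := hj
    interval_cases j <;> simp
  | succ k ih =>
    set ι := (I m k).indicator (1 : G m → ℝ) x
    set S := ∑ b ∈ range (M m k), D m b x
    set d := j / M m k
    set r := j % M m k
    have hd : d ≤ m k := Nat.div_le_of_le_mul (hj.trans_eq (by rw [M_succ, mul_comm]))
    have hr : r ≤ M m k := (Nat.mod_lt _ (M_pos (fun k => zero_lt_two.trans_le (hm k)) k)).le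
    have hdR : (d : ℝ) ≤ m k := Nat.cast_le.mpr hd
    have h₁ := norm_M_mul_sum_D_mul_M_le hm hd x
    have h₂ : ‖(∑ a ∈ range d, rad m k x ^ a) * S‖ ≤ m k * ‖S‖ :=
      (norm_mul_le _ _).trans (mul_le_mul_of_nonneg_right
        ((norm_geom_sum_rad_le k x d).trans hdR) (norm_nonneg _))
    have h₃ : ‖r * D m (d * M m k) x‖ ≤ m k * (M m k ^ 2 * ι) := by
      rw [norm_mul, Complex.norm_natCast]
      calc (r : ℝ) * ‖D m (d * M m k) x‖ ≤ M m k * (m k * M m k * ι) :=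
            mul_le_mul (Nat.cast_le.mpr hr) (norm_D_mul_M_le hm hd x) (norm_nonneg _)
              (Nat.cast_nonneg _)
        _ = m k * (M m k ^ 2 * ι) := by ring
    have h₄ : ‖psi m (d * M m k) x * ∑ c ∈ range r, D m c x‖ ≤ ∑ l ∈ range k,
        m l * ((m l + 1) * (M m l : ℝ) ^ 2 * (I m l).indicator 1 x +
          ‖∑ b ∈ range (M m l), D m b x‖) := by
      rw [norm_mul, norm_psi hm, one_mul]
      exact ih hr
    rw [← Nat.div_add_mod' j (M m k), sum_range_add, sum_D_mul_M hm hd,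
      sum_D_add hm (dvd_mul_left _ _) hr, sum_range_succ]
    calc _ ≤ ‖M m k * ∑ a ∈ range d, D m (a * M m k) x‖ + ‖(∑ a ∈ range d, rad m k x ^ a) * S‖ +
          (‖r * D m (d * M m k) x‖ + ‖psi m (d * M m k) x * ∑ c ∈ range r, D m c x‖) :=
          norm_add_le_of_le (norm_add_le _ _) (norm_add_le _ _)
      _ ≤ _ := by linarith

end

section Measure

variable (μ : Measure (G m)) [μ.IsAddRightInvariant]

/-- A set that does not constrain the `s`-th coordinate is the disjoint union of `m s`
translates of its slice `{y s = 0}`. -/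
lemma measure_eq_mul_measure_inter {s : ℕ} [NeZero (m s)] {A : Set (G m)} (hA : MeasurableSet A)
    (hinv : ∀ y ∈ A, ∀ u : ZMod (m s), y + Pi.single s u ∈ A) :
    μ A = m s * μ (A ∩ {y | y s = 0}) := by
  have hslice : ∀ u : ZMod (m s), A ∩ {y | y s = u} =
      (· + Pi.single s (-u)) ⁻¹' (A ∩ {y | y s = 0}) := by
    intro u
    ext y
    simp only [Set.mem_inter_iff, Set.mem_ofPred_eq, Set.mem_preimage, Pi.add_apply,
      Pi.single_eq_same, add_neg_eq_zero]
    refine and_congr_left fun _ => ⟨fun hy => hinv y hy _, fun hy => ?_⟩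
    simpa [add_assoc, ← Pi.single_add] using hinv _ hy u
  have hunion : A = ⋃ u : ZMod (m s), A ∩ {y | y s = u} := by
    ext y; simp
  conv_lhs => rw [hunion]
  rw [measure_iUnion (fun u v huv => Set.disjoint_left.2 fun y hu hv => huv (hu.2.symm.trans hv.2))
    fun u => hA.inter (show MeasurableSet {y : G m | y s = u} from
      (measurableSet_singleton u).preimage (measurable_pi_apply s)), tsum_fintype]
  rw [sum_congr rfl fun u _ => by rw [hslice u, measure_preimage_add_right], sum_const, card_univ,
    ZMod.card, nsmul_eq_mul]

variable [IsProbabilityMeasure μ] (hm : ∀ k, 0 < m k)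
include hm

lemma M_mul_measure_I (n : ℕ) : M m n * μ (I m n) = 1 := by
  have := fun k => NeZero.of_pos (hm k)
  induction n with
  | zero => simp [M]
  | succ n ih =>
    have hslice : I m n ∩ {y | y n = 0} = I m (n + 1) := by ext; simp [mem_I_succ]
    rw [← ih, measure_eq_mul_measure_inter μ (s := n) (measurableSet_I n) fun y hy u k hk => by
      simp [Pi.single_eq_of_ne hk.ne, hy k hk], hslice, M_succ, Nat.cast_mul]
    ring

lemma measureReal_I (n : ℕ) : μ.real (I m n) = (M m n : ℝ)⁻¹ := by
  have h : μ (I m n) * M m n = 1 := by rw [mul_comm]; exact M_mul_measure_I μ hm n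
  rw [measureReal_def, ENNReal.eq_inv_of_mul_eq_one_left h, ENNReal.toReal_inv,
    ENNReal.toReal_natCast]

lemma measureReal_J {s n : ℕ} (hsn : s < n) : μ.real (J m s n) = m s / M m n := by
  have := NeZero.of_pos (hm s)
  have hslice : J m s n ∩ {y | y s = 0} = I m n := by
    ext y
    simp only [J, I, Set.mem_inter_iff, Set.mem_ofPred_eq]
    exact ⟨fun h k hk => if hks : k = s then hks ▸ h.2 else h.1 k hk hks,
      fun h => ⟨fun i hi _ => h i hi, h s hsn⟩⟩
  rw [measureReal_def, measure_eq_mul_measure_inter μ (s := s) (measurableSet_J s n)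
    fun y hy u i hi his => by simp [Pi.single_eq_of_ne his, hy i hi his], hslice,
    ENNReal.toReal_mul, ← measureReal_def, measureReal_I μ hm, div_eq_mul_inv]
  simp

end Measure

lemma eLpNorm_translate_sub_le {α E : Type*} [AddGroup α] [MeasurableSpace α] [MeasurableAdd α]
    {μ : Measure α} [μ.IsAddRightInvariant] [NormedAddCommGroup E] {f : α → E}
    (hf : AEStronglyMeasurable f μ) (p : ℝ≥0∞) (t : α) :
    eLpNorm (fun x => f (x + t) - f x) p μ ≤ LpAddConst p * (2 * eLpNorm f p μ) := by
  have hmp := measurePreserving_add_right μ t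
  calc _ ≤ LpAddConst p * (eLpNorm (fun x => f (x + t)) p μ + eLpNorm f p μ) :=
        eLpNorm_sub_le' (hf.comp_measurePreserving hmp) hf p
    _ = _ := by rw [← Function.comp_def, eLpNorm_comp_measurePreserving hf hmp, two_mul]

lemma omega_nonneg (μ : Measure (G m)) (p : ℝ≥0∞) (f : G m → ℂ) (s : ℕ) :
    0 ≤ omega m μ p f s :=
  Real.iSup_nonneg fun _ => Real.iSup_nonneg fun _ => ENNReal.toReal_nonneg

lemma le_omega_of_mem {μ : Measure (G m)} [μ.IsAddRightInvariant] {p : ℝ≥0∞} {f : G m → ℂ}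
    (hf : MemLp f p μ) {s : ℕ} {t : G m} (ht : t ∈ I m s) :
    (eLpNorm (fun x => f (x + t) - f x) p μ).toReal ≤ omega m μ p f s := by
  have hfin : LpAddConst p * (2 * eLpNorm f p μ) ≠ ∞ :=
    ENNReal.mul_ne_top (LpAddConst_lt_top p).ne (ENNReal.mul_ne_top (by simp) hf.2.ne)
  have hbdd : BddAbove (Set.range fun t => ⨆ _ : t ∈ I m s,
      (eLpNorm (fun x => f (x + t) - f x) p μ).toReal) := by
    refine ⟨_, Set.forall_mem_range.2 fun t => Real.iSup_le (fun _ => ENNReal.toReal_mono hfin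
      (eLpNorm_translate_sub_le hf.1 p t)) ENNReal.toReal_nonneg⟩
  exact le_ciSup_of_le hbdd t (ciSup_pos (f := fun _ => _) ht).ge

lemma mul_indicator_one_le {X : Type*} {A : Set X} {x : X} {w a c : ℝ} (hc : 0 ≤ c)
    (hw : x ∈ A → w ≤ a) : w * (c * A.indicator 1 x) ≤ c * a * A.indicator 1 x := by
  by_cases hx : x ∈ A
  · simpa [hx, mul_comm c] using mul_le_mul_of_nonneg_right (hw hx) hc
  · simp [hx]

def fejerMajorant (m : ℕ → ℕ) (ω : ℕ → ℝ) (k : ℕ) (x : G m) : ℝ :=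
  ∑ l ∈ range k, m l * ((m l + 1) * (M m l : ℝ) ^ 2 * ω l * (I m l).indicator 1 x +
    ∑ s ∈ range l, (m s * M m s * M m l : ℝ) * ω s * (J m s l).indicator 1 x)

lemma natCast_mul_norm_K (j : ℕ) (x : G m) : j * ‖K m j x‖ = ‖∑ n ∈ range (j + 1), D m n x‖ := by
  rw [range_eq_Ico, sum_eq_sum_Ico_succ_bot j.succ_pos, D_zero, zero_add, zero_add,
    Nat.succ_eq_add_one, Ico_add_one_right_eq_Icc, K,
    norm_mul, norm_inv, Complex.norm_natCast, ← mul_assoc]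
  rcases eq_or_ne j 0 with rfl | hj
  · simp
  · rw [mul_inv_cancel₀ (Nat.cast_ne_zero.2 hj), one_mul]

lemma natCast_mul_norm_K_le (hm : ∀ k, 2 ≤ m k) {j k : ℕ} (hj : j < M m k) (x : G m) :
    j * ‖K m j x‖ ≤ fejerMajorant m 1 k x := by
  rw [natCast_mul_norm_K]
  refine (norm_sum_D_le hm hj x).trans (sum_le_sum fun l _ => ?_)
  simp only [Pi.one_apply, mul_one]
  gcongr
  exact norm_sum_D_M_le hm l x

lemma mul_fejerMajorant_le {ω : ℕ → ℝ} {k : ℕ} {x : G m} {w : ℝ}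
    (hwω : ∀ s, x ∈ I m s → w ≤ ω s) : w * fejerMajorant m 1 k x ≤ fejerMajorant m ω k x := by
  rw [fejerMajorant, mul_sum]
  refine sum_le_sum fun l _ => ?_
  rw [mul_left_comm, mul_add, mul_sum]
  refine mul_le_mul_of_nonneg_left (add_le_add ?_ (sum_le_sum fun s hs => ?_))
    (Nat.cast_nonneg _)
  · simpa using mul_indicator_one_le (by positivity) (hwω l)
  · simpa using mul_indicator_one_le (by positivity) fun hx =>
      hwω s (J_subset_I (mem_range.mp hs).le hx)

lemma integrable_const_mul_indicator_one {X : Type*} [MeasurableSpace X] (μ : Measure X)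
    [IsFiniteMeasure μ] {A : Set X} (hA : MeasurableSet A) (c : ℝ) :
    Integrable (fun x => c * A.indicator 1 x) μ :=
  ((integrable_const (1 : ℝ)).indicator hA).const_mul c

section Integral

variable (μ : Measure (G m))

lemma integrable_fejerMajorant [IsFiniteMeasure μ] (ω : ℕ → ℝ) (k : ℕ) :
    Integrable (fejerMajorant m ω k) μ :=
  integrable_finsetSum _ fun l _ => .const_mul (.add
    (integrable_const_mul_indicator_one μ (measurableSet_I l) _)
    (integrable_finsetSum _ fun s _ =>
      integrable_const_mul_indicator_one μ (measurableSet_J s l) _)) _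

lemma integral_fejerMajorant [IsProbabilityMeasure μ] [μ.IsAddRightInvariant]
    (hm : ∀ k, 0 < m k) (ω : ℕ → ℝ) (k : ℕ) :
    ∫ x, fejerMajorant m ω k x ∂μ = ∑ l ∈ range k,
      m l * ((m l + 1) * M m l * ω l + ∑ s ∈ range l, (m s : ℝ) ^ 2 * M m s * ω s) := by
  have hI l := integrable_const_mul_indicator_one μ (measurableSet_I (m := m) l)
  have hJ s l := integrable_const_mul_indicator_one μ (measurableSet_J (m := m) s l)
  have hM n : (M m n : ℝ) ≠ 0 := Nat.cast_ne_zero.2 (M_pos hm n).ne'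
  simp only [fejerMajorant]
  rw [integral_finsetSum]
  swap
  · exact fun l _ => .const_mul (.add (hI l _) (integrable_finsetSum _ fun s _ => hJ s l _)) _
  refine sum_congr rfl fun l _ => ?_
  rw [integral_const_mul, integral_add (hI l _) (integrable_finsetSum _ fun s _ => hJ s l _),
    integral_const_mul, integral_indicator_one (measurableSet_I l), measureReal_I μ hm,
    integral_finsetSum _ fun s _ => hJ s l _]
  congr 2
  · field_simp
  · refine sum_congr rfl fun s hs => ?_
    rw [integral_const_mul, integral_indicator_one (measurableSet_J s l),
      measureReal_J μ hm (mem_range.mp hs)]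
    field_simp [hM l]

end Integral

lemma sum_fejerMajorant_coeff_le {R : ℝ} (hmR : ∀ i, (m i : ℝ) ≤ R) {ω : ℕ → ℝ}
    (hω : ∀ s, 0 ≤ ω s) (k : ℕ) :
    ∑ l ∈ range k, m l * ((m l + 1) * M m l * ω l + ∑ s ∈ range l, (m s : ℝ) ^ 2 * M m s * ω s) ≤
      (R + 1) ^ 3 * ∑ l ∈ range k, ∑ s ∈ range (l + 1), (M m s : ℝ) * ω s := by
  have hR : 0 ≤ R := (Nat.cast_nonneg _).trans (hmR 0)
  have hcoeff₁ a : (m a : ℝ) * (m a + 1) ≤ (R + 1) ^ 3 :=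
    calc (m a : ℝ) * (m a + 1) ≤ (R + 1) * (R + 1) := by
          gcongr <;> linarith [hmR a]
      _ ≤ (R + 1) ^ 3 := by nlinarith [mul_nonneg hR (sq_nonneg (R + 1))]
  have hcoeff₂ a b : (m a : ℝ) * m b ^ 2 ≤ (R + 1) ^ 3 :=
    calc (m a : ℝ) * m b ^ 2 ≤ R * R ^ 2 := by gcongr <;> exact hmR _
      _ ≤ (R + 1) ^ 3 := by nlinarith [pow_le_pow_left₀ hR (show R ≤ R + 1 by linarith) 3]
  rw [mul_sum]
  refine sum_le_sum fun l _ => ?_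
  rw [sum_range_succ, mul_add, mul_add, mul_sum, mul_sum]
  rw [add_comm (∑ s ∈ range l, _)]
  refine add_le_add ?_ (sum_le_sum fun s _ => ?_)
  · have := mul_le_mul_of_nonneg_right (hcoeff₁ l) (mul_nonneg (Nat.cast_nonneg (M m l)) (hω l))
    linarith
  · have := mul_le_mul_of_nonneg_right (hcoeff₂ l s) (mul_nonneg (Nat.cast_nonneg (M m s)) (hω s))
    linarith

/-- integral estimate for general Fejér kernels `K_j`, `M_k ≤ j < M_(k+1)`. -/
theorem fejer_kernel_integral_estimate
    (m : ℕ → ℕ) (hm : ∀ k, 2 ≤ m k)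
    (R : ℝ) (hR : IsLUB (Set.range fun k => (m k : ℝ)) R)
    (μ : Measure (G m)) [IsProbabilityMeasure μ] [μ.IsAddHaarMeasure]
    :
    ∃ C > (0 : ℝ), ∀ (p : ℝ≥0∞), 1 ≤ p → p ≠ ∞ → ∀ (f : G m → ℂ), MemLp f p μ →
      ∀ (k j : ℕ), M m k ≤ j → j < M m (k + 1) →
      (j : ℝ) * ∫ t, (eLpNorm (fun x => f (x + t) - f x) p μ).toReal * ‖K m j t‖ ∂μ ≤
        C * ∑ l ∈ Finset.range (k + 1), ∑ s ∈ Finset.range (l + 1),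
          (M m s : ℝ) * omega m μ p f s := by
  have hmR : ∀ i, (m i : ℝ) ≤ R := fun i => hR.1 ⟨i, rfl⟩
  have hR₀ : 0 ≤ R := (Nat.cast_nonneg _).trans (hmR 0)
  refine ⟨(R + 1) ^ 3, by positivity, fun p _ _ f hf k j _ hj => ?_⟩
  have hpoint : ∀ t, (eLpNorm (fun x => f (x + t) - f x) p μ).toReal * (j * ‖K m j t‖) ≤
      fejerMajorant m (omega m μ p f) (k + 1) t := fun t =>
    (mul_le_mul_of_nonneg_left (natCast_mul_norm_K_le hm hj t) ENNReal.toReal_nonneg).trans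
      (mul_fejerMajorant_le fun s hs => le_omega_of_mem hf hs)
  calc (j : ℝ) * ∫ t, (eLpNorm (fun x => f (x + t) - f x) p μ).toReal * ‖K m j t‖ ∂μ
      = ∫ t, (eLpNorm (fun x => f (x + t) - f x) p μ).toReal * (j * ‖K m j t‖) ∂μ := by
        rw [← integral_const_mul]
        simp only [mul_left_comm]
    _ ≤ ∫ t, fejerMajorant m (omega m μ p f) (k + 1) t ∂μ :=
        integral_mono_of_nonneg (ae_of_all _ fun t => by positivity)
          (integrable_fejerMajorant μ _ _) (ae_of_all _ hpoint)
    _ = _ := integral_fejerMajorant μ (fun k => zero_lt_two.trans_le (hm k)) _ _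
    _ ≤ _ := sum_fejerMajorant_coeff_le hmR (omega_nonneg μ p f) _

end VilenkinPaper
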